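/- Let f be Lipschitz on X and suppose M_max(f) consists of a unique measure μ_∞. Then either μ_∞ is supported on a single periodic orbit, or the support of μ_∞ contains no periodic points. -/

import Mathlib

open MeasureTheory Filter Real Topology
open scoped ENNReal

noncomputable section

abbrev X (d : ℕ) : Type := ℕ → Fin d

def shift {d : ℕ} (x : X d) : X d := fun n => x (n + 1)

def birkhoff {d : ℕ} (f : X d → ℝ) (n : ℕ) (x : X d) : ℝ :=
  ∑ i ∈ Finset.range n, f (shift^[i] x)

def IsPeriodic {d : ℕ} (x : X d) : Prop := ∃ n, 0 < n ∧ shift^[n] x = x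

def minPer {d : ℕ} (x : X d) : ℕ := Function.minimalPeriod shift x

def beta {d : ℕ} (f : X d → ℝ) : ℝ :=
  sSup {r : ℝ | ∃ μ : Measure (X d), IsProbabilityMeasure μ ∧ μ.map shift = μ ∧ r = ∫ x, f x ∂μ}

def Ifun {d : ℕ} (f : X d → ℝ) (x : X d) : ℝ :=
  (minPer x : ℝ) * beta f - birkhoff f (minPer x) x

def dtheta {d : ℕ} (θ : ℝ) (x y : X d) : ℝ :=
  letI : Decidable (x = y) := Classical.dec _
  if h : x = y then 0 else θ ^ Nat.find (Function.ne_iff.mp h)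

def LipWrt {d : ℕ} (θ C : ℝ) (f : X d → ℝ) : Prop :=
  ∀ x y, |f x - f y| ≤ C * dtheta θ x y

def periodize {d : ℕ} (n : ℕ) (w : Fin (n + 1) → Fin d) : X d :=
  fun i => w ⟨i % (n + 1), Nat.mod_lt i (Nat.succ_pos n)⟩

def pressure {d : ℕ} (g : X d → ℝ) : ℝ :=
  Filter.limsup (fun n : ℕ =>
    Real.log (∑ w : Fin (n + 1) → Fin d, Real.exp (birkhoff g (n + 1) (periodize n w))) / ((n : ℝ) + 1))
    Filter.atTop

def zetaVal {d : ℕ} (f : X d → ℝ) (c s : ℝ) (k : X d → ℝ) : ℝ :=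
  ∑' n : ℕ, ∑ w : Fin (n + 1) → Fin d,
    Real.exp (c * s * birkhoff f (n + 1) (periodize n w) - ((n : ℝ) + 1) * pressure (fun y => c * f y))
      * (birkhoff k (n + 1) (periodize n w) / ((n : ℝ) + 1))

def etaVal {d : ℕ} (f : X d → ℝ) (c : ℝ) (N : ℕ) (k : X d → ℝ) : ℝ :=
  ∑ n ∈ Finset.range N, ∑ w : Fin (n + 1) → Fin d,
    Real.exp (c * birkhoff f (n + 1) (periodize n w)) * (birkhoff k (n + 1) (periodize n w) / ((n : ℝ) + 1))

def piVal {d : ℕ} (f : X d → ℝ) (c : ℝ) (N : ℕ) (k : X d → ℝ) : ℝ :=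
  ∑ n ∈ Finset.range N, ∑ w : Fin (n + 1) → Fin d,
    Real.exp (c * birkhoff f (n + 1) (periodize n w) - ((n : ℝ) + 1) * pressure (fun y => c * f y))
      * (birkhoff k (n + 1) (periodize n w) / ((n : ℝ) + 1))

def cylSet {d : ℕ} (m : ℕ) (w : Fin m → Fin d) : Set (X d) :=
  {x : X d | ∀ i : Fin m, x i = w i}

def Itilde {d : ℕ} (θ : ℝ) (f : X d → ℝ) (x : X d) : EReal :=
  ⨆ ε : {e : ℝ // 0 < e},
    sInf {r : EReal | ∃ y : X d, IsPeriodic y ∧ dtheta θ x y ≤ ε.1 ∧ r = ((Ifun f y : ℝ) : EReal)}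

def orbitMeasure {d : ℕ} (x : X d) : Measure (X d) :=
  ((minPer x : ℝ≥0∞))⁻¹ • ∑ i ∈ Finset.range (minPer x), Measure.dirac (shift^[i] x)

/-!
Let `x` be a periodic point of period `p` whose every neighbourhood has positive `μ∞`-measure.
Its orbit measure is invariant, so `∫ f` over it is at most `β = beta f`; if equality holds, it
is maximizing and uniqueness identifies it with `μ∞`. Otherwise the Birkhoff sum `S_p g x` of
`g = f - β` is negative. Comparison with periodic orbits and bounded distortion for Lipschitz
`f` bound every Birkhoff sum of `g` by `K = C / (1 - θ)`, so `u y = sup {S_n g z | σⁿ z = y}`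
is a continuous sub-action with values in `[0, K]`: `g + u ≤ u ∘ σ`. Integrating against the
maximizing measure `μ∞` forces `S_n g = u ∘ σⁿ - u ≥ -K` almost everywhere, whereas on the
cylinder following the orbit of `x` for `N` periods `S_{Np} g ≤ N S_p g + K < -K` once `N` is
large. So that cylinder is `μ∞`-null, a contradiction.
-/

section Subaction

variable {α : Type*} {T : α → α} {g u : α → ℝ}

theorem Function.IsPeriodicPt.birkhoffSum_mul {M : Type*} [AddCommMonoid M] {p : ℕ} {x : α}
    (hx : Function.IsPeriodicPt T p x) (g : α → M) (N : ℕ) :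
    birkhoffSum T g (N * p) x = N • birkhoffSum T g p x := by
  induction N with
  | zero => simp
  | succ N ih =>
    rw [Nat.succ_mul, birkhoffSum_add, ih, (hx.const_mul N).eq, succ_nsmul]

theorem birkhoffSum_le_sub_of_subaction (hsub : ∀ y, g y + u y ≤ u (T y)) (n : ℕ) (y : α) :
    birkhoffSum T g n y ≤ u (T^[n] y) - u y := by
  induction n with
  | zero => simp
  | succ n ih =>
    rw [birkhoffSum_succ, Function.iterate_succ_apply']
    linarith [hsub (T^[n] y)]

variable (T g) in
def maxSubaction (y : α) : ℝ :=
  sSup {r | ∃ n z, T^[n] z = y ∧ birkhoffSum T g n z = r}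

variable {K : ℝ} (hK : ∀ n z, birkhoffSum T g n z ≤ K)
include hK

theorem le_maxSubaction {n : ℕ} {z : α} :
    birkhoffSum T g n z ≤ maxSubaction T g (T^[n] z) :=
  le_csSup ⟨K, by rintro _ ⟨n, z, -, rfl⟩; exact hK n z⟩ ⟨n, z, rfl, rfl⟩

theorem maxSubaction_nonneg (y : α) : 0 ≤ maxSubaction T g y := by
  simpa using le_maxSubaction hK (n := 0) (z := y)

theorem maxSubaction_le (y : α) : maxSubaction T g y ≤ K :=
  csSup_le ⟨0, 0, y, rfl, birkhoffSum_zero _ _ _⟩ (by rintro _ ⟨n, z, -, rfl⟩; exact hK n z)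

theorem add_maxSubaction_le (y : α) : g y + maxSubaction T g y ≤ maxSubaction T g (T y) := by
  rw [← le_sub_iff_add_le']
  refine csSup_le ⟨0, 0, y, rfl, birkhoffSum_zero _ _ _⟩ ?_
  rintro _ ⟨n, z, rfl, rfl⟩
  have := le_maxSubaction hK (n := n + 1) (z := z)
  rw [birkhoffSum_succ, Function.iterate_succ_apply'] at this
  linarith

end Subaction

section Measure

variable {α : Type*} [MeasurableSpace α] {μ : Measure α} {T : α → α} {g u : α → ℝ}

theorem MeasureTheory.MeasurePreserving.integral_comp_of_integrable {β : Type*}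
    [MeasurableSpace β] {ν : Measure β} {S : α → β} (hS : MeasurePreserving S μ ν) {h : β → ℝ}
    (hh : Integrable h ν) : ∫ y, h (S y) ∂μ = ∫ y, h y ∂ν := by
  rw [← hS.map_eq] at hh ⊢
  exact (integral_map hS.measurable.aemeasurable hh.aestronglyMeasurable).symm

theorem integrable_birkhoffSum (hT : MeasurePreserving T μ μ) (hg : Integrable g μ) (n : ℕ) :
    Integrable (birkhoffSum T g n) μ :=
  integrable_finsetSum _ fun k _ => (hT.iterate k).integrable_comp_of_integrable hg

theorem integral_birkhoffSum (hT : MeasurePreserving T μ μ) (hg : Integrable g μ) (n : ℕ) :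
    ∫ y, birkhoffSum T g n y ∂μ = n * ∫ y, g y ∂μ := by
  simp only [birkhoffSum]
  rw [integral_finsetSum (f := fun k y => g (T^[k] y)) _
    fun k _ => (hT.iterate k).integrable_comp_of_integrable hg]
  simp [(hT.iterate _).integral_comp_of_integrable hg]

/-- The defect `u ∘ T^[n] - u - S_n g` is nonnegative and has integral zero. -/
theorem ae_birkhoffSum_eq_of_subaction (hT : MeasurePreserving T μ μ) (hg : Integrable g μ)
    (hg0 : ∫ y, g y ∂μ = 0) (hu : Integrable u μ) (hsub : ∀ y, g y + u y ≤ u (T y)) (n : ℕ) :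
    ∀ᵐ y ∂μ, birkhoffSum T g n y = u (T^[n] y) - u y := by
  have huT : Integrable (fun y => u (T^[n] y)) μ := (hT.iterate n).integrable_comp_of_integrable hu
  have hcob : Integrable (fun y => u (T^[n] y) - u y) μ := huT.sub hu
  have hdefect : ∫ y, (u (T^[n] y) - u y - birkhoffSum T g n y) ∂μ = 0 := by
    rw [integral_sub hcob (integrable_birkhoffSum hT hg n), integral_sub huT hu,
      integral_birkhoffSum hT hg, (hT.iterate n).integral_comp_of_integrable hu, hg0]
    ring
  filter_upwards [(integral_eq_zero_iff_of_nonneg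
    (fun y => sub_nonneg.2 (birkhoffSum_le_sub_of_subaction hsub n y))
      (hcob.sub (integrable_birkhoffSum hT hg n))).1 hdefect] with y hy
  simp only [Pi.zero_apply] at hy
  linarith

variable (T) in
def orbitAverage (n : ℕ) (x : α) : Measure α :=
  (n : ℝ≥0∞)⁻¹ • ∑ i ∈ Finset.range n, Measure.dirac (T^[i] x)

theorem isProbabilityMeasure_orbitAverage {n : ℕ} (hn : n ≠ 0) (x : α) :
    IsProbabilityMeasure (orbitAverage T n x) := by
  constructor
  simp [orbitAverage, ENNReal.inv_mul_cancel (Nat.cast_ne_zero.2 hn) (ENNReal.natCast_ne_top n)]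

theorem map_orbitAverage (hT : Measurable T) {n : ℕ} {x : α} (hx : Function.IsPeriodicPt T n x) :
    (orbitAverage T n x).map T = orbitAverage T n x := by
  rcases n with _ | n
  · simp [orbitAverage]
  rw [orbitAverage, Measure.map_smul, ← Measure.mapₗ_apply_of_measurable hT, map_sum]
  simp only [Measure.mapₗ_apply_of_measurable hT, Measure.map_dirac' hT,
    ← Function.iterate_succ_apply' T]
  rw [Finset.sum_range_succ, hx.eq, Finset.sum_range_succ' (fun i => Measure.dirac (T^[i] x))]
  rfl

theorem integral_orbitAverage [MeasurableSingletonClass α] (n : ℕ) (x : α) :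
    ∫ y, g y ∂(orbitAverage T n x) = (n : ℝ)⁻¹ * birkhoffSum T g n x := by
  rw [orbitAverage, integral_smul_measure,
    integral_finsetSum_measure fun i _ => integrable_dirac enorm_lt_top]
  simp [birkhoffSum, integral_dirac]

end Measure

section Shift

open PiNat

variable {d : ℕ} {θ C : ℝ} {f g : X d → ℝ}

theorem shift_iterate_apply (x : X d) (n i : ℕ) : shift^[n] x i = x (n + i) := by
  induction n generalizing x with
  | zero => simp
  | succ n ih => rw [Function.iterate_succ_apply, ih, shift, Nat.add_right_comm]

theorem measurable_shift : Measurable (shift : X d → X d) :=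
  measurable_pi_lambda _ fun n => measurable_pi_apply (n + 1)

theorem shift_iterate_mem_cylinder {x y : X d} {i k : ℕ} (h : y ∈ cylinder x (i + k)) :
    shift^[i] y ∈ cylinder (shift^[i] x) k := fun j hj => by
  simp only [shift_iterate_apply]
  exact h (i + j) (by omega)

theorem dtheta_le_pow (hθ0 : 0 ≤ θ) (hθ1 : θ ≤ 1) {x y : X d} {k : ℕ}
    (h : y ∈ cylinder x k) : dtheta θ x y ≤ θ ^ k := by
  unfold dtheta
  split_ifs with hxy
  · positivity
  · exact pow_le_pow_of_le_one hθ0 hθ1 <| (Nat.le_find_iff _ _).2 fun i hi hne => hne (h i hi).symm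

theorem continuous_of_abs_sub_le_of_mem_cylinder {E : ℕ → Type*} [∀ n, TopologicalSpace (E n)]
    [∀ n, DiscreteTopology (E n)] {h : (∀ n, E n) → ℝ} {A : ℝ} (hθ0 : 0 ≤ θ) (hθ1 : θ < 1)
    (hh : ∀ k x y, y ∈ cylinder x k → |h x - h y| ≤ A * θ ^ k) : Continuous h := by
  refine continuous_iff_continuousAt.2 fun x => Metric.tendsto_nhds.2 fun ε hε => ?_
  obtain ⟨k, hk⟩ := (((tendsto_pow_atTop_nhds_zero_of_lt_one hθ0 hθ1).const_mul A).eventually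
    (gt_mem_nhds (by simpa using hε))).exists
  filter_upwards [(isOpen_cylinder E x k).mem_nhds (self_mem_cylinder x k)] with y hy
  rw [Real.dist_eq, abs_sub_comm]
  exact (hh k x y hy).trans_lt hk

theorem LipWrt.mono (hf : LipWrt θ C f) (hθ0 : 0 ≤ θ) {C' : ℝ} (hC : C ≤ C') :
    LipWrt θ C' f := fun x y =>
  (hf x y).trans (mul_le_mul_of_nonneg_right hC (by unfold dtheta; split_ifs <;> positivity))

theorem LipWrt.sub_const (hf : LipWrt θ C f) (c : ℝ) : LipWrt θ C (fun x => f x - c) :=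
  fun x y => by simpa using hf x y

section Lipschitz

variable (hθ0 : 0 ≤ θ) (hθ1 : θ < 1) (hC : 0 ≤ C)
include hθ0 hθ1 hC

theorem LipWrt.abs_sub_le_of_mem_cylinder (hf : LipWrt θ C f) {x y : X d} {k : ℕ}
    (h : y ∈ cylinder x k) : |f x - f y| ≤ C * θ ^ k :=
  (hf x y).trans (mul_le_mul_of_nonneg_left (dtheta_le_pow hθ0 hθ1.le h) hC)

theorem LipWrt.continuous (hf : LipWrt θ C f) : Continuous f :=
  continuous_of_abs_sub_le_of_mem_cylinder hθ0 hθ1 fun _ _ _ =>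
    hf.abs_sub_le_of_mem_cylinder hθ0 hθ1 hC

theorem LipWrt.abs_le_abs_add (hf : LipWrt θ C f) (x₀ x : X d) : |f x| ≤ |f x₀| + C := by
  have := hf.abs_sub_le_of_mem_cylinder hθ0 hθ1 hC (x := x) (y := x₀) (k := 0) (by simp)
  rw [pow_zero, mul_one] at this
  linarith [abs_sub_abs_le_abs_sub (f x) (f x₀)]

theorem LipWrt.abs_birkhoffSum_sub_le (hf : LipWrt θ C f) {x y : X d} {n k : ℕ}
    (h : y ∈ cylinder x (n + k)) :
    |birkhoffSum shift f n x - birkhoffSum shift f n y| ≤ C / (1 - θ) * θ ^ k := by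
  have hterm : ∀ i ∈ Finset.range n,
      |f (shift^[i] x) - f (shift^[i] y)| ≤ C * θ ^ k * θ ^ (n - 1 - i) := fun i hi => by
    have hcyl : y ∈ cylinder x (i + (n - 1 - i + k)) :=
      cylinder_anti x (by simp at hi; omega) h
    rw [mul_assoc, ← pow_add, add_comm k]
    exact hf.abs_sub_le_of_mem_cylinder hθ0 hθ1 hC (shift_iterate_mem_cylinder hcyl)
  calc |birkhoffSum shift f n x - birkhoffSum shift f n y|
      ≤ ∑ i ∈ Finset.range n, |f (shift^[i] x) - f (shift^[i] y)| := by
        rw [birkhoffSum, birkhoffSum, ← Finset.sum_sub_distrib]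
        exact Finset.abs_sum_le_sum_abs _ _
    _ ≤ ∑ i ∈ Finset.range n, C * θ ^ k * θ ^ (n - 1 - i) := Finset.sum_le_sum hterm
    _ = C * θ ^ k * ∑ i ∈ Finset.range n, θ ^ i := by
        rw [Finset.mul_sum, Finset.sum_range_reflect (fun i => C * θ ^ k * θ ^ i)]
    _ ≤ C * θ ^ k * (1 / (1 - θ)) := by
        refine mul_le_mul_of_nonneg_left ?_ (by positivity)
        have := geom_sum_Ico_le_of_lt_one hθ0 hθ1 (m := 0) (n := n)
        rwa [← Finset.range_eq_Ico, pow_zero] at this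
    _ = C / (1 - θ) * θ ^ k := by ring

theorem maxSubaction_le_add_of_mem_cylinder (hg : LipWrt θ C g) {K : ℝ}
    (hK : ∀ n z, birkhoffSum shift g n z ≤ K) {y y' : X d} {k : ℕ} (h : y' ∈ cylinder y k) :
    maxSubaction shift g y ≤ maxSubaction shift g y' + C / (1 - θ) * θ ^ k := by
  refine csSup_le ⟨0, 0, y, rfl, birkhoffSum_zero _ _ _⟩ ?_
  rintro _ ⟨n, z, rfl, rfl⟩
  classical
  let z' : X d := fun j => if j < n then z j else y' (j - n)
  have hz' : shift^[n] z' = y' := funext fun j => by simp [z', shift_iterate_apply]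
  have hzz' : z' ∈ cylinder z (n + k) := fun j hj => by
    by_cases hjn : j < n
    · simp [z', hjn]
    · simpa [z', hjn, shift_iterate_apply, Nat.add_sub_cancel' (not_lt.1 hjn)] using
        h (j - n) (by omega)
  have := le_maxSubaction hK (n := n) (z := z')
  rw [hz'] at this
  linarith [(abs_le.1 (hg.abs_birkhoffSum_sub_le hθ0 hθ1 hC hzz')).2]

theorem continuous_maxSubaction (hg : LipWrt θ C g) {K : ℝ}
    (hK : ∀ n z, birkhoffSum shift g n z ≤ K) : Continuous (maxSubaction shift g) :=
  continuous_of_abs_sub_le_of_mem_cylinder hθ0 hθ1 fun k y y' h => by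
    have h₁ := maxSubaction_le_add_of_mem_cylinder hθ0 hθ1 hC hg hK h
    have h₂ :=
      maxSubaction_le_add_of_mem_cylinder hθ0 hθ1 hC hg hK ((mem_cylinder_comm y y' k).1 h)
    exact abs_sub_le_iff.2 ⟨by linarith, by linarith⟩

end Lipschitz

end Shift

section Maximizing

open PiNat

variable {d : ℕ} {θ C : ℝ} {f : X d → ℝ}

theorem orbitMeasure_eq_orbitAverage (x : X d) : orbitMeasure x = orbitAverage shift (minPer x) x :=
  rfl

theorem integral_le_beta {B : ℝ} (hB : ∀ x, |f x| ≤ B) (μ : Measure (X d))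
    [IsProbabilityMeasure μ] (hμ : μ.map shift = μ) : ∫ x, f x ∂μ ≤ beta f := by
  refine le_csSup ⟨B, ?_⟩ ⟨μ, ‹_›, hμ, rfl⟩
  rintro _ ⟨ν, hν, -, rfl⟩
  have := norm_integral_le_of_norm_le_const (μ := ν) (f := f) (Eventually.of_forall hB)
  simp only [Real.norm_eq_abs, probReal_univ, mul_one] at this
  exact (le_abs_self _).trans this

variable (hθ0 : 0 ≤ θ) (hθ1 : θ < 1) (hC : 0 ≤ C)
include hθ0 hθ1 hC

/-- Comparing with the periodic orbit that repeats the first `n` symbols of `x`. -/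
theorem LipWrt.birkhoffSum_sub_beta_le (hf : LipWrt θ C f) (n : ℕ) (x : X d) :
    birkhoffSum shift (fun y => f y - beta f) n x ≤ C / (1 - θ) := by
  have hsub : birkhoffSum shift (fun y => f y - beta f) n x
      = birkhoffSum shift f n x - n * beta f := by
    simp [birkhoffSum, Finset.sum_sub_distrib]
  rcases Nat.eq_zero_or_pos n with rfl | hn
  · simpa using div_nonneg hC (sub_nonneg.2 hθ1.le)
  let P : X d := fun i => x (i % n)
  have hP : Function.IsPeriodicPt shift n P :=
    funext fun i => by simp [P, shift_iterate_apply, Nat.add_mod_left]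
  have hxP : P ∈ cylinder x (n + 0) := fun i hi => by
    simp [P, Nat.mod_eq_of_lt (show i < n by omega)]
  have := isProbabilityMeasure_orbitAverage (T := shift) hn.ne' P
  have hP_le : (n : ℝ)⁻¹ * birkhoffSum shift f n P ≤ beta f := by
    rw [← integral_orbitAverage]
    exact integral_le_beta (hf.abs_le_abs_add hθ0 hθ1 hC x) _
      (map_orbitAverage measurable_shift hP)
  rw [inv_mul_le_iff₀ (by exact_mod_cast hn)] at hP_le
  have hdist := hf.abs_birkhoffSum_sub_le hθ0 hθ1 hC hxP
  rw [pow_zero, mul_one] at hdist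
  linarith [(abs_le.1 hdist).2]

theorem LipWrt.ae_birkhoffSum_sub_beta_eq (hf : LipWrt θ C f) {μ : Measure (X d)}
    [IsProbabilityMeasure μ] (hμ : μ.map shift = μ) (hmax : ∫ x, f x ∂μ = beta f) (n : ℕ) :
    ∀ᵐ y ∂μ, birkhoffSum shift (fun y => f y - beta f) n y =
      maxSubaction shift (fun y => f y - beta f) (shift^[n] y)
        - maxSubaction shift (fun y => f y - beta f) y := by
  have hK := hf.birkhoffSum_sub_beta_le hθ0 hθ1 hC
  have hg := (hf.sub_const (beta f)).continuous hθ0 hθ1 hC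
  have hu := continuous_maxSubaction hθ0 hθ1 hC (hf.sub_const (beta f)) hK
  refine ae_birkhoffSum_eq_of_subaction ⟨measurable_shift, hμ⟩
    (hg.integrable_of_hasCompactSupport (.of_compactSpace _)) ?_
    (hu.integrable_of_hasCompactSupport (.of_compactSpace _)) (add_maxSubaction_le hK) n
  rw [integral_sub ((hf.continuous hθ0 hθ1 hC).integrable_of_hasCompactSupport
    (.of_compactSpace _)) (integrable_const _), hmax]
  simp

theorem LipWrt.exists_measure_cylinder_eq_zero (hf : LipWrt θ C f) {μ : Measure (X d)}
    [IsProbabilityMeasure μ] (hμ : μ.map shift = μ) (hmax : ∫ x, f x ∂μ = beta f) {p : ℕ}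
    {x : X d} (hx : Function.IsPeriodicPt shift p x) (hlt : birkhoffSum shift f p x < p * beta f) :
    ∃ m, μ (cylinder x m) = 0 := by
  have hK := hf.birkhoffSum_sub_beta_le hθ0 hθ1 hC
  have hdeficit : birkhoffSum shift (fun y => f y - beta f) p x < 0 := by
    simpa [birkhoffSum, Finset.sum_sub_distrib] using hlt
  obtain ⟨N, hN⟩ :=
    exists_nat_gt (2 * (C / (1 - θ)) / -birkhoffSum shift (fun y => f y - beta f) p x)
  rw [div_lt_iff₀ (neg_pos.2 hdeficit)] at hN
  refine ⟨N * p, by_contra fun hne => ?_⟩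
  obtain ⟨y, hy, hcob⟩ := Measure.exists_mem_of_measure_ne_zero_of_ae hne
    (ae_restrict_of_ae (hf.ae_birkhoffSum_sub_beta_eq hθ0 hθ1 hC hμ hmax (N * p)))
  have hdist :=
    (hf.sub_const (beta f)).abs_birkhoffSum_sub_le hθ0 hθ1 hC (n := N * p) (k := 0) hy
  rw [pow_zero, mul_one, hx.birkhoffSum_mul, nsmul_eq_mul] at hdist
  linarith [(abs_le.1 hdist).1, maxSubaction_nonneg hK (shift^[N * p] y), maxSubaction_le hK y]

end Maximizing

theorem stmt11_general (d : ℕ) (θ C : ℝ) (hθ0 : 0 < θ) (hθ1 : θ < 1)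
    (f : X d → ℝ) (hf : LipWrt θ C f)
    (μinf : Measure (X d)) (hprob : IsProbabilityMeasure μinf)
    (hinv : μinf.map shift = μinf) (hmax : (∫ y, f y ∂μinf) = beta f)
    (huniq : ∀ ν : Measure (X d), IsProbabilityMeasure ν → ν.map shift = ν →
      (∫ y, f y ∂ν) = beta f → ν = μinf) :
    (∃ x : X d, IsPeriodic x ∧ μinf = orbitMeasure x) ∨
    (∀ x : X d, IsPeriodic x → ∃ U : Set (X d), IsOpen U ∧ x ∈ U ∧ μinf U = 0) := by
  refine or_iff_not_imp_right.2 fun hsupp => ?_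
  push Not at hsupp
  obtain ⟨x, ⟨n, hn, hxn⟩, hx⟩ := hsupp
  have hC : 0 ≤ max C 0 := le_max_right C 0
  have hf' : LipWrt θ (max C 0) f := hf.mono hθ0.le (le_max_left C 0)
  have hper : Function.IsPeriodicPt shift (minPer x) x :=
    Function.isPeriodicPt_minimalPeriod shift x
  have hp : 0 < minPer x := Function.IsPeriodicPt.minimalPeriod_pos hn hxn
  have hinv' := map_orbitAverage measurable_shift hper
  have := isProbabilityMeasure_orbitAverage (T := shift) hp.ne' x
  refine ⟨x, ⟨n, hn, hxn⟩, ?_⟩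
  rw [orbitMeasure_eq_orbitAverage]
  refine (huniq _ this hinv' ?_).symm
  refine le_antisymm (integral_le_beta (hf'.abs_le_abs_add hθ0.le hθ1 hC x) _ hinv')
    (not_lt.1 fun hlt => ?_)
  rw [integral_orbitAverage, inv_mul_lt_iff₀ (by exact_mod_cast hp)] at hlt
  obtain ⟨m, hm⟩ := hf'.exists_measure_cylinder_eq_zero hθ0.le hθ1 hC hinv hmax hper hlt
  exact hx _ (PiNat.isOpen_cylinder _ x m) (PiNat.self_mem_cylinder x m) hm

theorem stmt11 (d : ℕ) (hd : 0 < d) (θ C : ℝ) (hθ0 : 0 < θ) (hθ1 : θ < 1)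
    (f : X d → ℝ) (hf : LipWrt θ C f)
    (μinf : Measure (X d)) (hprob : IsProbabilityMeasure μinf)
    (hinv : μinf.map shift = μinf) (hmax : (∫ y, f y ∂μinf) = beta f)
    (huniq : ∀ ν : Measure (X d), IsProbabilityMeasure ν → ν.map shift = ν →
      (∫ y, f y ∂ν) = beta f → ν = μinf) :
    (∃ x : X d, IsPeriodic x ∧ μinf = orbitMeasure x) ∨
    (∀ x : X d, IsPeriodic x → ∃ U : Set (X d), IsOpen U ∧ x ∈ U ∧ μinf U = 0) :=
  stmt11_general d θ C hθ0 hθ1 f hf μinf hprob hinv hmax huniq
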